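/- arXiv:math/9712280 — 6 statements merged into one kernel-verified Lean document; each statement's English description precedes it below -/
import Mathlib

section
/- (Boundary Schwarz Lemma) Under hypotheses (a)–(d), the derivative of f at the boundary point b satisfies |f'(b)| ≥ 2/(1 + |f'(0)|). -/
/-!
Write `f z = z g(z)` with `g = dslope f 0`, so that `g` maps the disk into the closed disk and
`g 0 = f'(0)`. Composing `g` with the disk automorphism moving `g 0` to `0` and applying
Schwarz's lemma gives the Schwarz–Pick bound `|g z| ≤ (α + |z|) / (1 + α |z|)`, `α = |f'(0)|`.
Along the radius `z = r b` this yields `1 - |f(r b)| ≥ (1 - r)(1 + r) / (1 + α r)`, hence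
`|f(r b) - f(b)| / (1 - r) ≥ (1 + r) / (1 + α r)`, and letting `r → 1` gives
`|f'(b)| ≥ 2 / (1 + α)`.
-/

open Complex Filter

open ComplexConjugate Metric Set Topology

noncomputable def blaschkeFactor (a z : ℂ) : ℂ := (z - a) / (1 - conj a * z)

theorem sq_norm_one_sub_conj_mul_sub_sq_norm_sub (a z : ℂ) :
    ‖1 - conj a * z‖ ^ 2 - ‖z - a‖ ^ 2 = (1 - ‖a‖ ^ 2) * (1 - ‖z‖ ^ 2) := by
  simp only [Complex.sq_norm, normSq_apply, sub_re, sub_im, mul_re, mul_im, conj_re, conj_im,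
    one_re, one_im]
  ring

theorem norm_blaschkeFactor_le_one {a z : ℂ} (ha : ‖a‖ ≤ 1) (hz : ‖z‖ ≤ 1) :
    ‖blaschkeFactor a z‖ ≤ 1 := by
  rw [blaschkeFactor, norm_div]
  refine div_le_one_of_le₀ ?_ (norm_nonneg _)
  have hid := sq_norm_one_sub_conj_mul_sub_sq_norm_sub a z
  have hK : 0 ≤ (1 - ‖a‖ ^ 2) * (1 - ‖z‖ ^ 2) := by
    apply mul_nonneg <;> nlinarith [norm_nonneg a, norm_nonneg z]
  exact le_of_sq_le_sq (by linarith) (norm_nonneg _)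

theorem blaschkeFactor_neg_blaschkeFactor {a z : ℂ} (ha : ‖a‖ < 1) (hz : 1 - conj a * z ≠ 0) :
    blaschkeFactor (-a) (blaschkeFactor a z) = z := by
  have haa : 1 - conj a * a ≠ 0 := by
    rw [conj_mul', ← ofReal_pow, ← ofReal_one, ← ofReal_sub, ofReal_ne_zero]
    nlinarith [norm_nonneg a]
  simp only [blaschkeFactor, map_neg, neg_mul, sub_neg_eq_add]
  rw [div_add' _ _ _ hz, mul_div_assoc', add_div' _ _ _ hz, div_div_div_cancel_right₀ hz,
    div_eq_iff (by convert haa using 1; ring)]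
  ring

theorem norm_blaschkeFactor_neg_mul_le {a u : ℂ} (ha : ‖a‖ ≤ 1) (hu : ‖u‖ ≤ 1) :
    ‖blaschkeFactor (-a) u‖ * (1 + ‖a‖ * ‖u‖) ≤ ‖a‖ + ‖u‖ := by
  have hid := sq_norm_one_sub_conj_mul_sub_sq_norm_sub (-a) u
  simp only [map_neg, neg_mul, sub_neg_eq_add, norm_neg] at hid
  have hK : 0 ≤ (1 - ‖a‖ ^ 2) * (1 - ‖u‖ ^ 2) := by
    apply mul_nonneg <;> nlinarith [norm_nonneg a, norm_nonneg u]
  have hD : ‖1 + conj a * u‖ ≤ 1 + ‖a‖ * ‖u‖ := by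
    simpa using norm_add_le (1 : ℂ) (conj a * u)
  rcases (norm_nonneg (1 + conj a * u)).eq_or_lt with hD0 | hD0
  · simp [blaschkeFactor, ← hD0]; positivity
  rw [blaschkeFactor, map_neg, neg_mul, sub_neg_eq_add, sub_neg_eq_add, norm_div,
    div_mul_eq_mul_div, div_le_iff₀ hD0]
  apply le_of_sq_le_sq _ (by positivity)
  nlinarith [mul_le_mul_of_nonneg_left (pow_le_pow_left₀ (norm_nonneg _) hD 2) hK]

theorem norm_mul_le_of_mapsTo_ball {g : ℂ → ℂ} (hd : DifferentiableOn ℂ g (ball 0 1))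
    (hg : MapsTo g (ball 0 1) (closedBall 0 1)) {z : ℂ} (hz : z ∈ ball 0 1) :
    ‖g z‖ * (1 + ‖g 0‖ * ‖z‖) ≤ ‖g 0‖ + ‖z‖ := by
  have hg_le : ∀ w ∈ ball (0 : ℂ) 1, ‖g w‖ ≤ 1 := fun w hw => mem_closedBall_zero_iff.mp (hg hw)
  have hz1 : ‖z‖ < 1 := mem_ball_zero_iff.mp hz
  set a := g 0
  rcases (hg_le 0 (mem_ball_self one_pos)).eq_or_lt with ha | ha
  · rw [ha]; nlinarith [hg_le z hz, norm_nonneg z]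
  have hden : ∀ w ∈ ball (0 : ℂ) 1, 1 - conj a * g w ≠ 0 := fun w hw h => by
    have : ‖conj a * g w‖ < 1 := by
      rw [norm_mul, norm_conj]
      nlinarith [hg_le w hw, norm_nonneg (g w), norm_nonneg a]
    rw [← sub_eq_zero.mp h, norm_one] at this
    exact this.false
  have hschwarz : ‖blaschkeFactor a (g z)‖ ≤ ‖z‖ := by
    refine norm_le_norm_of_mapsTo_ball (f := fun w => blaschkeFactor a (g w)) ?_ ?_ ?_ hz1
    · exact (hd.sub_const a).div ((differentiableOn_const 1).sub (hd.const_mul _)) hden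
    · exact fun w hw => mem_closedBall_zero_iff.mpr
        (norm_blaschkeFactor_le_one ha.le (hg_le w hw))
    · simp [blaschkeFactor, a]
  have hpick := norm_blaschkeFactor_neg_mul_le ha.le
    (norm_blaschkeFactor_le_one ha.le (hg_le z hz))
  rw [blaschkeFactor_neg_blaschkeFactor ha (hden z hz)] at hpick
  have hga : ‖g z‖ * ‖a‖ ≤ 1 := mul_le_one₀ (hg_le z hz) (norm_nonneg _) ha.le
  nlinarith [mul_le_mul_of_nonneg_right hga (sub_nonneg.mpr hschwarz)]

theorem norm_mul_le_of_mapsTo_ball_of_map_zero {f : ℂ → ℂ}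
    (hd : DifferentiableOn ℂ f (ball 0 1)) (hf : MapsTo f (ball 0 1) (closedBall 0 1))
    (h₀ : f 0 = 0) {z : ℂ} (hz : z ∈ ball 0 1) :
    ‖f z‖ * (1 + ‖deriv f 0‖ * ‖z‖) ≤ ‖z‖ * (‖deriv f 0‖ + ‖z‖) := by
  have hgd : DifferentiableOn ℂ (dslope f 0) (ball 0 1) :=
    (differentiableOn_dslope (ball_mem_nhds 0 one_pos)).mpr hd
  have hg : MapsTo (dslope f 0) (ball 0 1) (closedBall 0 1) := fun w hw => by
    simpa using norm_dslope_le_div_of_mapsTo_ball hd (by rwa [h₀]) hw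
  have hfz : f z = z * dslope f 0 z := by simpa [h₀] using (sub_smul_dslope f 0 z).symm
  have hpick := norm_mul_le_of_mapsTo_ball hgd hg hz
  rw [dslope_same] at hpick
  rw [hfz, norm_mul, mul_assoc]
  exact mul_le_mul_of_nonneg_left hpick (norm_nonneg z)

theorem one_add_div_le_norm_div_of_norm_mul_le {w c : ℂ} {α r : ℝ} (hc : ‖c‖ = 1) (hα : 0 ≤ α)
    (hr : r ∈ Ioo 0 1) (hw : ‖w‖ * (1 + α * r) ≤ r * (α + r)) :
    (1 + r) / (1 + α * r) ≤ ‖w - c‖ / (1 - r) := by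
  obtain ⟨hr0, hr1⟩ := hr
  have hwc : 1 - ‖w‖ ≤ ‖w - c‖ := by
    simpa [hc] using (norm_sub_norm_le c w).trans_eq (norm_sub_rev c w)
  rw [div_le_div_iff₀ (by positivity) (by linarith)]
  nlinarith [mul_le_mul_of_nonneg_right hwc (by positivity : 0 ≤ 1 + α * r)]

theorem tendsto_ofReal_mul_nhdsLT_one {b : ℂ} (hb : ‖b‖ = 1) :
    Tendsto (fun r : ℝ => (r : ℂ) * b) (𝓝[<] 1) (𝓝[ball 0 1] b) := by
  refine tendsto_nhdsWithin_iff.mpr ⟨?_, ?_⟩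
  · have : Continuous (fun r : ℝ => (r : ℂ) * b) := by fun_prop
    simpa using this.tendsto 1 |>.mono_left nhdsWithin_le_nhds
  · filter_upwards [Ioo_mem_nhdsLT one_pos] with r hr
    simp [hb, abs_of_pos hr.1, hr.2]

theorem boundary_schwarz_lemma_general
    (f : ℂ → ℂ) (b fb' : ℂ)
    (ha : DifferentiableOn ℂ f {z : ℂ | ‖z‖ < 1})
    (hb : ∀ z : ℂ, ‖z‖ < 1 → ‖f z‖ < 1)
    (hc : f 0 = 0)
    (hbmod : ‖b‖ = 1)
    (hfb : ‖f b‖ = 1)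
    (hderiv : Tendsto (fun z => (f z - f b) / (z - b))
      (nhdsWithin b {z : ℂ | ‖z‖ < 1}) (nhds fb')) :
    2 / (1 + ‖deriv f 0‖) ≤ ‖fb'‖ := by
  set α := ‖deriv f 0‖
  have hball : {z : ℂ | ‖z‖ < 1} = ball 0 1 := by ext; simp
  rw [hball] at ha hderiv
  have hmaps : MapsTo f (ball 0 1) (closedBall 0 1) := fun z hz => by
    simpa using (hb z (by simpa using hz)).le
  have hlim : Tendsto (fun r : ℝ => (1 + r) / (1 + α * r)) (𝓝[<] 1) (𝓝 (2 / (1 + α))) := by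
    have : ContinuousAt (fun r : ℝ => (1 + r) / (1 + α * r)) 1 :=
      (continuousAt_const.add continuousAt_id).div
        (continuousAt_const.add (continuousAt_const.mul continuousAt_id)) (by positivity)
    simpa [one_add_one_eq_two] using this.tendsto.mono_left nhdsWithin_le_nhds
  refine le_of_tendsto_of_tendsto hlim (hderiv.comp (tendsto_ofReal_mul_nhdsLT_one hbmod)).norm ?_
  filter_upwards [Ioo_mem_nhdsLT one_pos] with r hr
  have hrb : ‖(r : ℂ) * b‖ = r := by simp [hbmod, abs_of_pos hr.1]
  have hdist : ‖(r : ℂ) * b - b‖ = 1 - r := by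
    rw [← sub_one_mul, norm_mul, hbmod, mul_one, norm_sub_rev, ← ofReal_one, ← ofReal_sub,
      norm_real, Real.norm_of_nonneg (by linarith [hr.2])]
  rw [Function.comp_apply, norm_div, hdist]
  refine one_add_div_le_norm_div_of_norm_mul_le hfb (norm_nonneg _) hr ?_
  have hschwarz := norm_mul_le_of_mapsTo_ball_of_map_zero ha hmaps hc (z := r * b)
    (by rw [mem_ball_zero_iff, hrb]; exact hr.2)
  rwa [hrb] at hschwarz

/-- **The boundary Schwarz Lemma.** If `f` is holomorphic on the unit disk,
maps it into itself with `f 0 = 0`, extends continuously to a boundary point `b`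
with `|f b| = 1`, and has a derivative `fb'` at `b` (as a limit from within the disk),
then `|f'(b)| ≥ 2 / (1 + |f'(0)|)`. -/
theorem boundary_schwarz_lemma
    (f : ℂ → ℂ) (b fb' : ℂ)
    (ha : DifferentiableOn ℂ f {z : ℂ | ‖z‖ < 1})
    (hb : ∀ z : ℂ, ‖z‖ < 1 → ‖f z‖ < 1)
    (hc : f 0 = 0)
    (hbmod : ‖b‖ = 1)
    (hcont : ContinuousWithinAt f ({z : ℂ | ‖z‖ < 1} ∪ {b}) b)
    (hfb : ‖f b‖ = 1)
    (hderiv : Tendsto (fun z => (f z - f b) / (z - b))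
      (nhdsWithin b {z : ℂ | ‖z‖ < 1}) (nhds fb')) :
    2 / (1 + ‖deriv f 0‖) ≤ ‖fb'‖ :=
  boundary_schwarz_lemma_general f b fb' ha hb hc hbmod hfb hderiv
end

section
/- Under hypotheses (a)–(d), the derivative of f at the boundary point b satisfies |f'(b)| ≥ 1. -/
open Complex Filter Metric Set Topology

/-!
By the Schwarz lemma `‖f z‖ ≤ ‖z‖` on the disk, so along the radius `r ↦ r • b` the numerator of
the difference quotient satisfies `‖f (r • b) - f b‖ ≥ 1 - r = ‖r • b - b‖`. Every radial
difference quotient therefore has norm at least `1`, and so does their limit `f'(b)`.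
-/

theorem tendsto_smul_nhdsLT_one_nhdsWithin_ball {E : Type*} [NormedAddCommGroup E]
    [NormedSpace ℝ E] {b : E} (hb : ‖b‖ ≤ 1) :
    Tendsto (fun r : ℝ => r • b) (𝓝[<] 1) (𝓝[ball 0 1] b) := by
  refine tendsto_nhdsWithin_of_tendsto_nhds_of_eventually_within _ ?_ ?_
  · exact (Continuous.tendsto' (by fun_prop) 1 b (one_smul ℝ b)).mono_left nhdsWithin_le_nhds
  · filter_upwards [Ioo_mem_nhdsLT (zero_lt_one' ℝ)] with r hr
    rw [mem_ball_zero_iff, norm_smul, Real.norm_of_nonneg hr.1.le]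
    exact (mul_le_of_le_one_right hr.1.le hb).trans_lt hr.2

theorem one_le_norm_sub_div_smul_sub {b v w : ℂ} {r : ℝ} (hb : ‖b‖ = 1) (hv : ‖v‖ = 1)
    (hr : r < 1) (hw : ‖w‖ ≤ r) : 1 ≤ ‖(w - v) / (r • b - b)‖ := by
  have hden : ‖r • b - b‖ = 1 - r := by
    rw [show r • b - b = (r - 1) • b by rw [sub_smul, one_smul], norm_smul, hb, mul_one,
      Real.norm_of_nonpos (by linarith), neg_sub]
  have hnum : 1 - r ≤ ‖w - v‖ :=
    calc 1 - r ≤ ‖v‖ - ‖w‖ := by linarith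
      _ ≤ ‖w - v‖ := norm_sub_rev w v ▸ norm_sub_norm_le v w
  rwa [norm_div, hden, one_le_div (by linarith)]

theorem boundary_schwarz_ge_one_general
    (f : ℂ → ℂ) (b fb' : ℂ)
    (ha : DifferentiableOn ℂ f {z : ℂ | ‖z‖ < 1})
    (hb : ∀ z : ℂ, ‖z‖ < 1 → ‖f z‖ < 1)
    (hc : f 0 = 0)
    (hbmod : ‖b‖ = 1)
    (hfb : ‖f b‖ = 1)
    (hderiv : Tendsto (fun z => (f z - f b) / (z - b))
      (nhdsWithin b {z : ℂ | ‖z‖ < 1}) (nhds fb')) :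
    1 ≤ ‖fb'‖ := by
  have hball : {z : ℂ | ‖z‖ < 1} = ball 0 1 := by ext; simp
  have hschwarz (z : ℂ) (hz : ‖z‖ < 1) : ‖f z‖ ≤ ‖z‖ :=
    norm_le_norm_of_mapsTo_ball (hball ▸ ha)
      (fun w hw => mem_closedBall_zero_iff.2 (hb w (mem_ball_zero_iff.1 hw)).le) hc hz
  have hradial := (continuous_norm.tendsto fb').comp
    (hderiv.comp (hball ▸ tendsto_smul_nhdsLT_one_nhdsWithin_ball hbmod.le))
  refine ge_of_tendsto hradial ?_
  filter_upwards [Ioo_mem_nhdsLT (zero_lt_one' ℝ)] with r hr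
  have hrb : ‖r • b‖ = r := by rw [norm_smul, hbmod, mul_one, Real.norm_of_nonneg hr.1.le]
  exact one_le_norm_sub_div_smul_sub hbmod hfb hr.2
    ((hschwarz _ (hrb.trans_lt hr.2)).trans hrb.le)

/-- Under hypotheses (a)–(d) of the boundary Schwarz Lemma, `|f'(b)| ≥ 1`. -/
theorem boundary_schwarz_ge_one
    (f : ℂ → ℂ) (b fb' : ℂ)
    (ha : DifferentiableOn ℂ f {z : ℂ | ‖z‖ < 1})
    (hb : ∀ z : ℂ, ‖z‖ < 1 → ‖f z‖ < 1)
    (hc : f 0 = 0)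
    (hbmod : ‖b‖ = 1)
    (hcont : ContinuousWithinAt f ({z : ℂ | ‖z‖ < 1} ∪ {b}) b)
    (hfb : ‖f b‖ = 1)
    (hderiv : Tendsto (fun z => (f z - f b) / (z - b))
      (nhdsWithin b {z : ℂ | ‖z‖ < 1}) (nhds fb')) :
    1 ≤ ‖fb'‖ :=
  boundary_schwarz_ge_one_general f b fb' ha hb hc hbmod hfb hderiv
end

section
/- Under hypotheses (a)–(d), |f'(b)| > 1 unless f is a rotation, i.e., unless f(z) = e^{iα} z on D for some real α. -/
/-!
Write `f z = z g z` with `g = dslope f 0`. If `f` is not a rotation, the equality case of the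
Schwarz lemma makes `g` a self-map of the disc, so `A = ‖f'(0)‖ = ‖g 0‖ < 1`, and Schwarz–Pick for
`g` (Schwarz's lemma applied to `g` composed with a disc automorphism) gives
`‖f z‖ ≤ ‖z‖ (‖z‖ + A) / (1 + A ‖z‖)`. Along the radius to `b` this reads
`1 - ‖f (r b)‖ ≥ (1 - r) (1 + r) / (1 + A r)`, and since `‖f b‖ = 1` we get
`‖f'(b)‖ ≥ 2 / (1 + A) > 1`.
-/

open Complex Filter
open Metric Set Topology ComplexConjugate

namespace Complex

noncomputable def mobiusDisk (a w : ℂ) : ℂ := (w + a) / (1 + conj a * w)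

theorem sq_norm_one_add_conj_mul_sub_sq_norm_add (a w : ℂ) :
    ‖1 + conj a * w‖ ^ 2 - ‖w + a‖ ^ 2 = (1 - ‖a‖ ^ 2) * (1 - ‖w‖ ^ 2) := by
  simp only [Complex.sq_norm, normSq_apply, add_re, add_im, mul_re, mul_im, conj_re, conj_im,
    one_re, one_im]
  ring

theorem one_add_conj_mul_ne_zero {a w : ℂ} (ha : ‖a‖ < 1) (hw : ‖w‖ ≤ 1) :
    1 + conj a * w ≠ 0 := by
  refine slitPlane_ne_zero (mem_slitPlane_of_norm_lt_one ?_)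
  rw [norm_mul, norm_conj]
  nlinarith [norm_nonneg a, norm_nonneg w]

theorem norm_mobiusDisk_lt_one {a w : ℂ} (ha : ‖a‖ < 1) (hw : ‖w‖ < 1) :
    ‖mobiusDisk a w‖ < 1 := by
  have hK : 0 < (1 - ‖a‖ ^ 2) * (1 - ‖w‖ ^ 2) := by
    apply mul_pos <;> nlinarith [norm_nonneg a, norm_nonneg w]
  rw [mobiusDisk, norm_div, div_lt_one (norm_pos_iff.mpr (one_add_conj_mul_ne_zero ha hw.le)),
    ← sq_lt_sq₀ (norm_nonneg _) (norm_nonneg _)]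
  linarith [sq_norm_one_add_conj_mul_sub_sq_norm_add a w]

theorem norm_mobiusDisk_le {a w : ℂ} (ha : ‖a‖ ≤ 1) (hw : ‖w‖ ≤ 1) :
    ‖mobiusDisk a w‖ ≤ (‖w‖ + ‖a‖) / (1 + ‖a‖ * ‖w‖) := by
  rcases eq_or_ne (1 + conj a * w) 0 with h | h
  · rw [mobiusDisk, h, div_zero, norm_zero]; positivity
  rw [mobiusDisk, norm_div, div_le_div_iff₀ (norm_pos_iff.mpr h) (by positivity),
    ← sq_le_sq₀ (by positivity) (by positivity)]
  have hK : 0 ≤ (1 - ‖a‖ ^ 2) * (1 - ‖w‖ ^ 2) := by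
    apply mul_nonneg <;> nlinarith [norm_nonneg a, norm_nonneg w]
  have htri : ‖w + a‖ ^ 2 ≤ (‖w‖ + ‖a‖) ^ 2 :=
    pow_le_pow_left₀ (norm_nonneg _) (norm_add_le w a) 2
  nlinarith [mul_le_mul_of_nonneg_right htri hK, sq_norm_one_add_conj_mul_sub_sq_norm_add a w]

@[simp]
theorem mobiusDisk_neg_self (a : ℂ) : mobiusDisk (-a) a = 0 := by
  simp [mobiusDisk]

theorem mobiusDisk_mobiusDisk_neg {a w : ℂ} (ha : ‖a‖ < 1) (hw : ‖w‖ ≤ 1) :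
    mobiusDisk a (mobiusDisk (-a) w) = w := by
  have hd : 1 + conj (-a) * w ≠ 0 := one_add_conj_mul_ne_zero (by rwa [norm_neg]) hw
  have hnormSq : 1 - conj a * a ≠ 0 := by
    rw [conj_mul', sub_ne_zero, ne_comm]
    exact_mod_cast (pow_lt_one₀ (norm_nonneg a) ha two_ne_zero).ne
  simp only [mobiusDisk, map_neg, neg_mul] at hd ⊢
  rw [div_add' _ _ _ hd, mul_div_assoc', one_add_div hd, div_div_div_cancel_right₀ hd,
    div_eq_iff (by convert hnormSq using 1; ring)]
  ring

theorem differentiableOn_mobiusDisk {a : ℂ} (ha : ‖a‖ < 1) :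
    DifferentiableOn ℂ (mobiusDisk a) (closedBall 0 1) := by
  intro w hw
  have := one_add_conj_mul_ne_zero ha (mem_closedBall_zero_iff.mp hw)
  unfold mobiusDisk
  fun_prop (disch := assumption)

theorem monotoneOn_add_div_one_add_mul {A : ℝ} (hA₀ : 0 ≤ A) (hA₁ : A ≤ 1) :
    MonotoneOn (fun t => (t + A) / (1 + A * t)) (Ici 0) := by
  intro s hs t ht hst
  simp only [mem_Ici] at hs ht
  rw [div_le_div_iff₀ (by positivity) (by positivity)]
  nlinarith [mul_le_mul_of_nonneg_left hst (by nlinarith : 0 ≤ 1 - A ^ 2)]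

theorem norm_le_add_div_one_add_mul_of_mapsTo_ball {g : ℂ → ℂ}
    (hd : DifferentiableOn ℂ g (ball 0 1)) (h_maps : MapsTo g (ball 0 1) (ball 0 1)) {z : ℂ}
    (hz : z ∈ ball 0 1) :
    ‖g z‖ ≤ (‖z‖ + ‖g 0‖) / (1 + ‖g 0‖ * ‖z‖) := by
  set a := g 0
  have ha : ‖a‖ < 1 := mem_ball_zero_iff.mp (h_maps (mem_ball_self one_pos))
  set F := mobiusDisk (-a) ∘ g
  have hF_maps : MapsTo F (ball 0 1) (closedBall 0 1) := fun w hw =>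
    mem_closedBall_zero_iff.mpr
      (norm_mobiusDisk_lt_one (by rwa [norm_neg]) (mem_ball_zero_iff.mp (h_maps hw))).le
  have hF_diff : DifferentiableOn ℂ F (ball 0 1) :=
    (differentiableOn_mobiusDisk (by rwa [norm_neg])).comp hd
      (fun w hw => ball_subset_closedBall (h_maps hw))
  have hFz : ‖F z‖ ≤ ‖z‖ :=
    norm_le_norm_of_mapsTo_ball hF_diff hF_maps (by simp [F, a]) (mem_ball_zero_iff.mp hz)
  have hgz : g z = mobiusDisk a (F z) :=
    (mobiusDisk_mobiusDisk_neg ha (mem_ball_zero_iff.mp (h_maps hz)).le).symm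
  calc ‖g z‖ ≤ (‖F z‖ + ‖a‖) / (1 + ‖a‖ * ‖F z‖) := by
        rw [hgz]; exact norm_mobiusDisk_le ha.le (hFz.trans (mem_ball_zero_iff.mp hz).le)
    _ ≤ (‖z‖ + ‖a‖) / (1 + ‖a‖ * ‖z‖) :=
        monotoneOn_add_div_one_add_mul (norm_nonneg a) ha.le (norm_nonneg _) (norm_nonneg _) hFz

theorem mapsTo_dslope_ball_of_not_rotation {f : ℂ → ℂ} (hd : DifferentiableOn ℂ f (ball 0 1))
    (h_maps : MapsTo f (ball 0 1) (ball 0 1)) (h₀ : f 0 = 0)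
    (hrot : ¬ ∃ α : ℝ, EqOn f (fun z => exp (α * I) * z) (ball 0 1)) :
    MapsTo (dslope f 0) (ball 0 1) (ball 0 1) := by
  have h_maps' : MapsTo f (ball 0 1) (closedBall (f 0) 1) := by
    rw [h₀]; exact h_maps.mono_right ball_subset_closedBall
  intro z hz
  refine mem_ball_zero_iff.mpr (((norm_dslope_le_div_of_mapsTo_ball hd h_maps' hz).trans_eq
    (div_one 1)).lt_of_ne fun h_eq => hrot ⟨arg (dslope f 0 z), fun w hw => ?_⟩)
  have hc : exp (arg (dslope f 0 z) * I) = dslope f 0 z := by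
    simpa [h_eq] using norm_mul_exp_arg_mul_I (dslope f 0 z)
  rw [hc, affine_of_mapsTo_ball_of_norm_dslope_eq_div hd h_maps' hz (by rw [h_eq, div_one]) hw]
  simp [h₀, mul_comm]

theorem norm_le_of_mapsTo_dslope_ball {f : ℂ → ℂ} (hd : DifferentiableOn ℂ f (ball 0 1))
    (h₀ : f 0 = 0) (h_maps : MapsTo (dslope f 0) (ball 0 1) (ball 0 1)) {z : ℂ}
    (hz : z ∈ ball 0 1) :
    ‖f z‖ ≤ ‖z‖ * ((‖z‖ + ‖deriv f 0‖) / (1 + ‖deriv f 0‖ * ‖z‖)) := by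
  have hg : DifferentiableOn ℂ (dslope f 0) (ball 0 1) :=
    (differentiableOn_dslope (isOpen_ball.mem_nhds (mem_ball_self one_pos))).mpr hd
  have hfz : f z = z * dslope f 0 z := by simpa [h₀] using (sub_smul_dslope f 0 z).symm
  rw [hfz, norm_mul, ← dslope_same]
  exact mul_le_mul_of_nonneg_left (norm_le_add_div_one_add_mul_of_mapsTo_ball hg h_maps hz)
    (norm_nonneg z)

theorem tendsto_ofReal_mul_nhdsLT_one {b : ℂ} (hb : ‖b‖ = 1) :
    Tendsto (fun r : ℝ => (r : ℂ) * b) (𝓝[<] 1) (𝓝[ball 0 1] b) := by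
  refine tendsto_nhdsWithin_of_tendsto_nhds_of_eventually_within _ ?_ ?_
  · have : Continuous fun r : ℝ => (r : ℂ) * b := by fun_prop
    simpa using (this.tendsto 1).mono_left nhdsWithin_le_nhds
  · filter_upwards [Ioo_mem_nhdsLT (zero_lt_one' ℝ)] with r hr
    rw [mem_ball_zero_iff, norm_mul, norm_real, Real.norm_of_nonneg hr.1.le, hb, mul_one]
    exact hr.2

theorem le_norm_of_tendsto_slope_of_radial_bound {f : ℂ → ℂ} {b L : ℂ} {φ : ℝ → ℝ} {c : ℝ}
    (hb : ‖b‖ = 1) (hfb : ‖f b‖ = 1)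
    (hL : Tendsto (fun z => (f z - f b) / (z - b)) (𝓝[ball 0 1] b) (𝓝 L))
    (hφ : Tendsto φ (𝓝[<] 1) (𝓝 c))
    (hbound : ∀ r ∈ Ioo (0 : ℝ) 1, ‖f (r * b)‖ ≤ 1 - (1 - r) * φ r) :
    c ≤ ‖L‖ := by
  refine le_of_tendsto_of_tendsto hφ ((hL.comp (tendsto_ofReal_mul_nhdsLT_one hb)).norm) ?_
  filter_upwards [Ioo_mem_nhdsLT (zero_lt_one' ℝ)] with r hr
  have hdist : ‖(r : ℂ) * b - b‖ = 1 - r := by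
    rw [← sub_one_mul, norm_mul, hb, mul_one, ← ofReal_one, ← ofReal_sub, norm_real,
      Real.norm_of_nonpos (by linarith [hr.2]), neg_sub]
  have hnum : 1 - ‖f (r * b)‖ ≤ ‖f (r * b) - f b‖ := by
    simpa [hfb, norm_sub_rev] using norm_sub_norm_le (f b) (f (r * b))
  rw [Function.comp_apply, norm_div, hdist, le_div_iff₀ (by linarith [hr.2])]
  nlinarith [hbound r hr]

theorem two_div_one_add_norm_deriv_le {f : ℂ → ℂ} {b L : ℂ}
    (hd : DifferentiableOn ℂ f (ball 0 1)) (h₀ : f 0 = 0)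
    (h_maps : MapsTo (dslope f 0) (ball 0 1) (ball 0 1)) (hb : ‖b‖ = 1) (hfb : ‖f b‖ = 1)
    (hL : Tendsto (fun z => (f z - f b) / (z - b)) (𝓝[ball 0 1] b) (𝓝 L)) :
    2 / (1 + ‖deriv f 0‖) ≤ ‖L‖ := by
  set A := ‖deriv f 0‖ with hA_def
  have hA : 0 ≤ A := norm_nonneg _
  have hφ : Tendsto (fun r : ℝ => (1 + r) / (1 + A * r)) (𝓝[<] 1) (𝓝 (2 / (1 + A))) := by
    have : ContinuousAt (fun r : ℝ => (1 + r) / (1 + A * r)) 1 :=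
      ContinuousAt.div (by fun_prop) (by fun_prop) (by positivity)
    simpa [one_add_one_eq_two] using this.tendsto.mono_left nhdsWithin_le_nhds
  refine le_norm_of_tendsto_slope_of_radial_bound hb hfb hL hφ fun r hr => ?_
  have hrb : ‖(r : ℂ) * b‖ = r := by
    rw [norm_mul, hb, mul_one, norm_real, Real.norm_of_nonneg hr.1.le]
  have hbound :=
    norm_le_of_mapsTo_dslope_ball hd h₀ h_maps (mem_ball_zero_iff.mpr (hrb.trans_lt hr.2))
  rw [hrb, ← hA_def] at hbound
  have hden : 1 + A * r ≠ 0 := by nlinarith [hr.1]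
  calc ‖f (r * b)‖ ≤ r * ((r + A) / (1 + A * r)) := hbound
    _ = 1 - (1 - r) * ((1 + r) / (1 + A * r)) := by
      rw [eq_sub_iff_add_eq, mul_div_assoc', mul_div_assoc', ← add_div, div_eq_one_iff_eq hden]
      ring

end Complex

theorem boundary_schwarz_gt_one_unless_rotation_general
    (f : ℂ → ℂ) (b fb' : ℂ)
    (ha : DifferentiableOn ℂ f {z : ℂ | ‖z‖ < 1})
    (hb : ∀ z : ℂ, ‖z‖ < 1 → ‖f z‖ < 1)
    (hc : f 0 = 0)
    (hbmod : ‖b‖ = 1)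
    (hfb : ‖f b‖ = 1)
    (hderiv : Tendsto (fun z => (f z - f b) / (z - b))
      (nhdsWithin b {z : ℂ | ‖z‖ < 1}) (nhds fb'))
    (hnotrot : ¬ ∃ α : ℝ, ∀ z : ℂ, ‖z‖ < 1 →
      f z = Complex.exp (α * Complex.I) * z) :
    1 < ‖fb'‖ := by
  rw [← ball_zero_eq] at ha hderiv
  have h_maps : MapsTo (dslope f 0) (ball 0 1) (ball 0 1) :=
    mapsTo_dslope_ball_of_not_rotation ha (fun z hz => by simpa using hb z (by simpa using hz)) hc
      fun ⟨α, hα⟩ => hnotrot ⟨α, fun z hz => hα (by simpa using hz)⟩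
  have hA : ‖deriv f 0‖ < 1 := by
    simpa [dslope_same] using h_maps (mem_ball_self one_pos)
  calc 1 < 2 / (1 + ‖deriv f 0‖) := by rw [lt_div_iff₀ (by positivity)]; linarith
    _ ≤ ‖fb'‖ := two_div_one_add_norm_deriv_le ha hc h_maps hbmod hfb hderiv

/-- Under hypotheses (a)–(d) of the boundary Schwarz Lemma, `|f'(b)| > 1`
unless `f` is a rotation `f z = e^{iα} z` on the unit disk. -/
theorem boundary_schwarz_gt_one_unless_rotation
    (f : ℂ → ℂ) (b fb' : ℂ)
    (ha : DifferentiableOn ℂ f {z : ℂ | ‖z‖ < 1})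
    (hb : ∀ z : ℂ, ‖z‖ < 1 → ‖f z‖ < 1)
    (hc : f 0 = 0)
    (hbmod : ‖b‖ = 1)
    (hcont : ContinuousWithinAt f ({z : ℂ | ‖z‖ < 1} ∪ {b}) b)
    (hfb : ‖f b‖ = 1)
    (hderiv : Tendsto (fun z => (f z - f b) / (z - b))
      (nhdsWithin b {z : ℂ | ‖z‖ < 1}) (nhds fb'))
    (hnotrot : ¬ ∃ α : ℝ, ∀ z : ℂ, ‖z‖ < 1 →
      f z = Complex.exp (α * Complex.I) * z) :
    1 < ‖fb'‖ :=
  boundary_schwarz_gt_one_unless_rotation_general f b fb' ha hb hc hbmod hfb hderiv hnotrot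
end

section
/- Suppose f satisfies (a), (b), (c). Then for every z with |z| < 1, (1 − |f(z)|)/(1 − |z|) ≥ (1 + |z|)/(1 + |f'(0)| |z|). -/
/-!
Put `g = dslope f 0`, so that `f z = z * g z` and `g 0 = f'(0)`. By the Schwarz lemma `g` maps the
disk into the closed disk, and the Schwarz–Pick lemma for `g` gives
`|g z| ≤ (|f'(0)| + |z|) / (1 + |f'(0)| |z|)`. Hence
`1 - |f z| ≥ 1 - |z| |g z| ≥ (1 - |z|²) / (1 + |f'(0)| |z|)`.
-/

open Complex ComplexConjugate Metric

lemma sq_norm_one_sub_conj_mul (u v : ℂ) :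
    ‖1 - conj v * u‖ ^ 2 = ‖u - v‖ ^ 2 + (1 - ‖u‖ ^ 2) * (1 - ‖v‖ ^ 2) := by
  simp only [Complex.sq_norm, Complex.normSq_apply, sub_re, sub_im, mul_re, mul_im, conj_re,
    conj_im, one_re, one_im]
  ring

lemma norm_sub_le_norm_one_sub_conj_mul {u v : ℂ} (hu : ‖u‖ ≤ 1) (hv : ‖v‖ ≤ 1) :
    ‖u - v‖ ≤ ‖1 - conj v * u‖ := by
  have hprod : 0 ≤ (1 - ‖u‖ ^ 2) * (1 - ‖v‖ ^ 2) :=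
    mul_nonneg (by nlinarith [norm_nonneg u]) (by nlinarith [norm_nonneg v])
  refine (pow_le_pow_iff_left₀ (norm_nonneg _) (norm_nonneg _) two_ne_zero).mp ?_
  rw [sq_norm_one_sub_conj_mul]
  linarith

lemma one_sub_conj_mul_ne_zero {u v : ℂ} (hu : ‖u‖ ≤ 1) (hv : ‖v‖ < 1) :
    1 - conj v * u ≠ 0 := by
  refine sub_ne_zero.mpr fun h ↦ ?_
  have : ‖conj v * u‖ < 1 := by
    rw [norm_mul, Complex.norm_conj]
    nlinarith [norm_nonneg u, norm_nonneg v]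
  simp [← h] at this

/-- Passing to moduli does not increase the pseudo-hyperbolic distance
`‖u - v‖ / ‖1 - conj v * u‖`. -/
lemma abs_norm_sub_norm_mul_le {u v : ℂ} (hu : ‖u‖ ≤ 1) (hv : ‖v‖ ≤ 1) :
    |‖u‖ - ‖v‖| * ‖1 - conj v * u‖ ≤ ‖u - v‖ * (1 - ‖u‖ * ‖v‖) := by
  have hprod : 0 ≤ (1 - ‖u‖ ^ 2) * (1 - ‖v‖ ^ 2) :=
    mul_nonneg (by nlinarith [norm_nonneg u]) (by nlinarith [norm_nonneg v])
  have hmod : |‖u‖ - ‖v‖| ^ 2 ≤ ‖u - v‖ ^ 2 :=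
    pow_le_pow_left₀ (abs_nonneg _) (abs_norm_sub_norm_le u v) 2
  have hrhs : 0 ≤ ‖u - v‖ * (1 - ‖u‖ * ‖v‖) :=
    mul_nonneg (norm_nonneg _) (by nlinarith [norm_nonneg u, norm_nonneg v])
  refine (pow_le_pow_iff_left₀ (by positivity) hrhs two_ne_zero).mp ?_
  have hid : (1 - ‖u‖ * ‖v‖) ^ 2 = |‖u‖ - ‖v‖| ^ 2 + (1 - ‖u‖ ^ 2) * (1 - ‖v‖ ^ 2) := by
    rw [sq_abs]; ring
  rw [mul_pow, mul_pow, sq_norm_one_sub_conj_mul, hid]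
  nlinarith [mul_le_mul_of_nonneg_right hmod hprod]

/-- **Schwarz–Pick lemma**: the Schwarz lemma applied to `g` followed by the disk automorphism
moving `g 0` to `0`. -/
lemma norm_sub_le_mul_norm_one_sub_conj_mul_of_mapsTo_ball {g : ℂ → ℂ}
    (hd : DifferentiableOn ℂ g (ball 0 1)) (h_maps : Set.MapsTo g (ball 0 1) (closedBall 0 1))
    (h₀ : ‖g 0‖ < 1) {z : ℂ} (hz : ‖z‖ < 1) :
    ‖g z - g 0‖ ≤ ‖z‖ * ‖1 - conj (g 0) * g z‖ := by
  have hg : ∀ w ∈ ball (0 : ℂ) 1, ‖g w‖ ≤ 1 := fun w hw ↦ by simpa using h_maps hw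
  have hden : ∀ w ∈ ball (0 : ℂ) 1, 1 - conj (g 0) * g w ≠ 0 := fun w hw ↦
    one_sub_conj_mul_ne_zero (hg w hw) h₀
  set F : ℂ → ℂ := fun w ↦ (g w - g 0) / (1 - conj (g 0) * g w)
  have hFd : DifferentiableOn ℂ F (ball 0 1) :=
    (hd.sub_const _).div ((hd.const_mul _).const_sub _) hden
  have hF_maps : Set.MapsTo F (ball 0 1) (closedBall 0 1) := fun w hw ↦ by
    rw [mem_closedBall_zero_iff, norm_div,
      div_le_one (norm_pos_iff.mpr (hden w hw))]
    exact norm_sub_le_norm_one_sub_conj_mul (hg w hw) h₀.le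
  have hFz := norm_le_norm_of_mapsTo_ball hFd hF_maps (by simp [F]) hz
  rwa [norm_div, div_le_iff₀ (norm_pos_iff.mpr (hden z (mem_ball_zero_iff.mpr hz)))] at hFz

lemma norm_mul_one_add_le_of_mapsTo_ball {g : ℂ → ℂ}
    (hd : DifferentiableOn ℂ g (ball 0 1)) (h_maps : Set.MapsTo g (ball 0 1) (closedBall 0 1))
    {z : ℂ} (hz : ‖z‖ < 1) :
    ‖g z‖ * (1 + ‖g 0‖ * ‖z‖) ≤ ‖g 0‖ + ‖z‖ := by
  have hg : ∀ w ∈ ball (0 : ℂ) 1, ‖g w‖ ≤ 1 := fun w hw ↦ by simpa using h_maps hw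
  have hgz := hg z (mem_ball_zero_iff.mpr hz)
  have hg0 := hg 0 (mem_ball_self one_pos)
  rcases hg0.lt_or_eq with h₀ | h₀
  · have hden := norm_pos_iff.mpr (one_sub_conj_mul_ne_zero hgz h₀)
    have hpick := norm_sub_le_mul_norm_one_sub_conj_mul_of_mapsTo_ball hd h_maps h₀ hz
    have hmod := abs_norm_sub_norm_mul_le hgz hg0
    have hmod_le : |‖g z‖ - ‖g 0‖| ≤ ‖z‖ * (1 - ‖g z‖ * ‖g 0‖) := by
      refine le_of_mul_le_mul_right ?_ hden
      nlinarith [mul_le_mul_of_nonneg_right hpick (by nlinarith [norm_nonneg (g z)] :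
        0 ≤ 1 - ‖g z‖ * ‖g 0‖)]
    nlinarith [le_abs_self (‖g z‖ - ‖g 0‖)]
  · rw [h₀]
    nlinarith [norm_nonneg z]

/-- If `f` is holomorphic on the unit disk, maps it into itself, and `f 0 = 0`, then
`(1 - |f z|) / (1 - |z|) ≥ (1 + |z|) / (1 + |f'(0)| |z|)` for `|z| < 1`. -/
theorem schwarz_ratio_bound
    (f : ℂ → ℂ)
    (ha : DifferentiableOn ℂ f {z : ℂ | ‖z‖ < 1})
    (hb : ∀ z : ℂ, ‖z‖ < 1 → ‖f z‖ < 1)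
    (hc : f 0 = 0) :
    ∀ z : ℂ, ‖z‖ < 1 →
      (1 + ‖z‖) / (1 + ‖deriv f 0‖ * ‖z‖) ≤
        (1 - ‖f z‖) / (1 - ‖z‖) := by
  intro z hz
  have hball : ball (0 : ℂ) 1 = {z : ℂ | ‖z‖ < 1} := by ext; simp
  rw [← hball] at ha
  have hf_maps : Set.MapsTo f (ball 0 1) (closedBall (f 0) 1) := fun w hw ↦ by
    simpa [hc] using (hb w (mem_ball_zero_iff.mp hw)).le
  have hg_maps : Set.MapsTo (dslope f 0) (ball 0 1) (closedBall 0 1) := fun w hw ↦ by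
    simpa using norm_dslope_le_div_of_mapsTo_ball ha hf_maps hw
  have hbound := norm_mul_one_add_le_of_mapsTo_ball
    ((differentiableOn_dslope (ball_mem_nhds _ one_pos)).mpr ha) hg_maps hz
  have hfz : ‖f z‖ = ‖z‖ * ‖dslope f 0 z‖ := by
    simpa [hc] using congrArg norm (sub_smul_dslope f 0 z).symm
  rw [dslope_same] at hbound
  rw [hfz, div_le_div_iff₀ (by positivity) (by linarith)]
  nlinarith [mul_le_mul_of_nonneg_left hbound (norm_nonneg z)]
end

section
/- (Radial version of the boundary Schwarz Lemma) Suppose f satisfies (a), (b), (c), and for some b with |b| = 1 the radial limit c = lim_{t→1⁻} f(tb) exists with |c| = 1, and the radial derivative L = lim_{t→1⁻} (f(tb) − c)/(tb − b) exists. Then |L| ≥ 2/(1 + |f'(0)|). -/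
/-!
Write `f z = z g z` with `g = dslope f 0`, a holomorphic map of the disk into the closed disk
with `g 0 = f'(0)`. Composing `g` with the disk automorphism exchanging `g 0` and `0` and applying
the Schwarz lemma gives the Schwarz–Pick bound `|g z| ≤ (A + |z|) / (1 + A |z|)`, `A = |f'(0)|`.
Along the radius, `|f (t b) - c| ≥ 1 - |f (t b)| ≥ (1 - t²) / (1 + A t)`; dividing by
`|t b - b| = 1 - t` and letting `t → 1` gives `|L| ≥ 2 / (1 + A)`.
-/

open Complex Filter Metric Set ComplexConjugate

namespace Complex

theorem norm_one_sub_conj_mul_sq_sub_norm_sub_sq (a w : ℂ) :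
    ‖1 - conj a * w‖ ^ 2 - ‖a - w‖ ^ 2 = (1 - ‖a‖ ^ 2) * (1 - ‖w‖ ^ 2) := by
  simp only [Complex.sq_norm, normSq_sub, normSq_conj, normSq_one, one_mul, map_mul,
    conj_conj, mul_re, conj_re, conj_im]
  ring

theorem norm_sub_le_norm_one_sub_conj_mul {a w : ℂ} (ha : ‖a‖ ≤ 1) (hw : ‖w‖ ≤ 1) :
    ‖a - w‖ ≤ ‖1 - conj a * w‖ := by
  have hid := norm_one_sub_conj_mul_sq_sub_norm_sub_sq a w
  have : 0 ≤ (1 - ‖a‖ ^ 2) * (1 - ‖w‖ ^ 2) := by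
    apply mul_nonneg <;> nlinarith [norm_nonneg a, norm_nonneg w]
  exact pow_le_pow_iff_left₀ (norm_nonneg _) (norm_nonneg _) two_ne_zero |>.mp (by linarith)

theorem norm_mul_one_add_le_of_norm_sub_le {a w : ℂ} {r : ℝ} (ha : ‖a‖ ≤ 1) (hw : ‖w‖ ≤ 1)
    (hr₀ : 0 ≤ r) (hr₁ : r ≤ 1) (h : ‖a - w‖ ≤ r * ‖1 - conj a * w‖) :
    ‖w‖ * (1 + ‖a‖ * r) ≤ ‖a‖ + r := by
  have hid := norm_one_sub_conj_mul_sq_sub_norm_sub_sq a w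
  set A := ‖a‖
  set W := ‖w‖
  set D := ‖1 - conj a * w‖
  have hAW : A * W ≤ 1 := mul_le_one₀ ha (norm_nonneg w) hw
  have hD : 1 - A * W ≤ D := by
    simpa [A, W, D] using norm_sub_norm_le (1 : ℂ) (conj a * w)
  have hN : ‖a - w‖ ^ 2 ≤ r ^ 2 * D ^ 2 := by
    rw [← mul_pow]; exact pow_le_pow_left₀ (norm_nonneg _) h 2
  have hD' : (1 - r ^ 2) * (1 - A * W) ^ 2 ≤ (1 - r ^ 2) * D ^ 2 :=
    mul_le_mul_of_nonneg_left (pow_le_pow_left₀ (by linarith) hD 2) (by nlinarith)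
  -- `(W - A)² = (1 - AW)² - (1 - A²)(1 - W²)`
  have key : (W - A) ^ 2 ≤ (r * (1 - A * W)) ^ 2 := by nlinarith
  have := abs_le_of_sq_le_sq' key (mul_nonneg hr₀ (by linarith))
  linarith

theorem norm_mul_one_add_le_of_mapsTo_closedBall {g : ℂ → ℂ}
    (hd : DifferentiableOn ℂ g (ball 0 1)) (h_maps : MapsTo g (ball 0 1) (closedBall 0 1))
    {z : ℂ} (hz : ‖z‖ < 1) :
    ‖g z‖ * (1 + ‖g 0‖ * ‖z‖) ≤ ‖g 0‖ + ‖z‖ := by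
  have hg : ∀ w ∈ ball (0 : ℂ) 1, ‖g w‖ ≤ 1 := fun w hw => mem_closedBall_zero_iff.mp (h_maps hw)
  have hz' : z ∈ ball (0 : ℂ) 1 := mem_ball_zero_iff.mpr hz
  set a := g 0
  rcases (hg 0 (mem_ball_self one_pos)).eq_or_lt with ha | ha
  · rw [ha]
    nlinarith [hg z hz', norm_nonneg z]
  have hden : ∀ w ∈ ball (0 : ℂ) 1, 1 - conj a * g w ≠ 0 := by
    intro w hw h1
    have hlt : ‖conj a * g w‖ < 1 := by
      rw [norm_mul, norm_conj]
      nlinarith [hg w hw, norm_nonneg a, norm_nonneg (g w)]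
    rw [← sub_eq_zero.mp h1, norm_one] at hlt
    exact hlt.false
  set h : ℂ → ℂ := fun w => (a - g w) / (1 - conj a * g w)
  have h_maps : MapsTo h (ball 0 1) (closedBall 0 1) := fun w hw => by
    rw [mem_closedBall_zero_iff, norm_div]
    exact div_le_one_of_le₀ (norm_sub_le_norm_one_sub_conj_mul ha.le (hg w hw)) (norm_nonneg _)
  have hhd : DifferentiableOn ℂ h (ball 0 1) :=
    ((differentiableOn_const a).sub hd).div
      ((differentiableOn_const 1).sub ((differentiableOn_const _).mul hd)) hden
  have hschwarz : ‖h z‖ ≤ ‖z‖ := norm_le_norm_of_mapsTo_ball hhd h_maps (by simp [h, a]) hz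
  rw [norm_div, div_le_iff₀ (norm_pos_iff.mpr (hden z hz'))] at hschwarz
  exact norm_mul_one_add_le_of_norm_sub_le ha.le (hg z hz') (norm_nonneg z) hz.le hschwarz

theorem norm_mul_one_add_le_of_mapsTo_closedBall_of_apply_zero {f : ℂ → ℂ}
    (hd : DifferentiableOn ℂ f (ball 0 1)) (h_maps : MapsTo f (ball 0 1) (closedBall 0 1))
    (h₀ : f 0 = 0) {z : ℂ} (hz : ‖z‖ < 1) :
    ‖f z‖ * (1 + ‖deriv f 0‖ * ‖z‖) ≤ ‖z‖ * (‖deriv f 0‖ + ‖z‖) := by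
  have h_maps' : MapsTo f (ball 0 1) (closedBall (f 0) 1) := by rwa [h₀]
  have hgd : DifferentiableOn ℂ (dslope f 0) (ball 0 1) :=
    (differentiableOn_dslope (ball_mem_nhds _ one_pos)).mpr hd
  have hg_maps : MapsTo (dslope f 0) (ball 0 1) (closedBall 0 1) := fun w hw => by
    simpa using norm_dslope_le_div_of_mapsTo_ball hd h_maps' hw
  have hfg : f z = z * dslope f 0 z := by simpa [h₀] using (sub_smul_dslope f 0 z).symm
  have hpick := norm_mul_one_add_le_of_mapsTo_closedBall hgd hg_maps hz
  rw [dslope_same] at hpick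
  rw [hfg, norm_mul, mul_assoc]
  exact mul_le_mul_of_nonneg_left hpick (norm_nonneg z)

end Complex

theorem radial_difference_quotient_lower_bound {f : ℂ → ℂ}
    (hd : DifferentiableOn ℂ f (ball 0 1)) (h_maps : MapsTo f (ball 0 1) (closedBall 0 1))
    (h₀ : f 0 = 0) {b c : ℂ} (hb : ‖b‖ = 1) (hc : 1 ≤ ‖c‖) {t : ℝ} (ht : t ∈ Ioo (0 : ℝ) 1) :
    (1 + t) / (1 + ‖deriv f 0‖ * t) ≤ ‖(f (t * b) - c) / (t * b - b)‖ := by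
  obtain ⟨ht₀, ht₁⟩ := ht
  have htb : ‖(t : ℂ) * b‖ = t := by simp [hb, ht₀.le]
  have htb_sub : ‖(t : ℂ) * b - b‖ = 1 - t := by
    rw [← sub_one_mul, norm_mul, hb, mul_one, ← ofReal_one, ← ofReal_sub, norm_real,
      Real.norm_of_nonpos (by linarith), neg_sub]
  have hf := norm_mul_one_add_le_of_mapsTo_closedBall_of_apply_zero hd h_maps h₀
    (htb.trans_lt ht₁)
  rw [htb] at hf
  have hnum : 1 - ‖f (t * b)‖ ≤ ‖f (t * b) - c‖ := by
    simpa [norm_sub_rev] using (sub_le_sub_right hc _).trans (norm_sub_norm_le c (f (t * b)))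
  have hpos : 0 < 1 + ‖deriv f 0‖ * t := by positivity
  rw [norm_div, htb_sub, div_le_div_iff₀ hpos (by linarith)]
  nlinarith [mul_le_mul_of_nonneg_right hnum hpos.le]

theorem radial_boundary_schwarz_general
    (f : ℂ → ℂ) (b c L : ℂ)
    (ha : DifferentiableOn ℂ f {z : ℂ | ‖z‖ < 1})
    (hb : ∀ z : ℂ, ‖z‖ < 1 → ‖f z‖ < 1)
    (hc : f 0 = 0)
    (hbmod : ‖b‖ = 1)
    (hcmod : ‖c‖ = 1)
    (hL : Tendsto (fun t : ℝ => (f ((t : ℂ) * b) - c) / ((t : ℂ) * b - b))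
      (nhdsWithin 1 (Set.Iio 1)) (nhds L)) :
    2 / (1 + ‖deriv f 0‖) ≤ ‖L‖ := by
  have hball : {z : ℂ | ‖z‖ < 1} = ball 0 1 := by ext; simp
  have h_maps : MapsTo f (ball 0 1) (closedBall 0 1) := fun z hz =>
    mem_closedBall_zero_iff.mpr (hb z (mem_ball_zero_iff.mp hz)).le
  have hbound : ∀ᶠ t : ℝ in nhdsWithin 1 (Iio 1),
      (1 + t) / (1 + ‖deriv f 0‖ * t) ≤ ‖(f (t * b) - c) / (t * b - b)‖ := by
    filter_upwards [Ioo_mem_nhdsLT one_pos] with t ht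
    exact radial_difference_quotient_lower_bound (hball ▸ ha) h_maps hc hbmod hcmod.ge ht
  have hlim : Tendsto (fun t : ℝ => (1 + t) / (1 + ‖deriv f 0‖ * t)) (nhdsWithin 1 (Iio 1))
      (nhds (2 / (1 + ‖deriv f 0‖))) := by
    have hcont : ContinuousAt (fun t : ℝ => (1 + t) / (1 + ‖deriv f 0‖ * t)) 1 := by
      apply ContinuousAt.div <;> first | fun_prop | positivity
    simpa [one_add_one_eq_two] using hcont.tendsto.mono_left nhdsWithin_le_nhds
  exact le_of_tendsto_of_tendsto hlim hL.norm hbound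

/-- **Radial version of the boundary Schwarz Lemma.** If `f` is holomorphic on the unit
disk, maps it into itself, `f 0 = 0`, and at a boundary point `b` (with `|b| = 1`) the
radial limit `c = lim_{t→1⁻} f (t b)` exists with `|c| = 1` and the radial derivative
`L = lim_{t→1⁻} (f (t b) - c) / (t b - b)` exists, then `|L| ≥ 2 / (1 + |f'(0)|)`. -/
theorem radial_boundary_schwarz
    (f : ℂ → ℂ) (b c L : ℂ)
    (ha : DifferentiableOn ℂ f {z : ℂ | ‖z‖ < 1})
    (hb : ∀ z : ℂ, ‖z‖ < 1 → ‖f z‖ < 1)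
    (hc : f 0 = 0)
    (hbmod : ‖b‖ = 1)
    (hlim : Tendsto (fun t : ℝ => f ((t : ℂ) * b)) (nhdsWithin 1 (Set.Iio 1)) (nhds c))
    (hcmod : ‖c‖ = 1)
    (hL : Tendsto (fun t : ℝ => (f ((t : ℂ) * b) - c) / ((t : ℂ) * b - b))
      (nhdsWithin 1 (Set.Iio 1)) (nhds L)) :
    2 / (1 + ‖deriv f 0‖) ≤ ‖L‖ :=
  radial_boundary_schwarz_general f b c L ha hb hc hbmod hcmod hL
end

section
/- (Sharpness of the boundary Schwarz Lemma) For each real a with 0 ≤ a < 1, the function f(z) = z(z + a)/(1 + a z) is holomorphic on the open unit disk D, satisfies |f(z)| < 1 on D, f(0) = 0, f'(0) = a, f(1) = 1 (as a limit within D), and f'(1) = 2/(1 + a); hence equality holds in the inequality |f'(b)| ≥ 2/(1 + |f'(0)|) at b = 1. -/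
open Complex Filter

open scoped ComplexConjugate

/-!
`f` is the Blaschke product `z · (z + a) / (1 + a z)`. Its Möbius factor maps the disk into
itself because of the identity `|1 + ā z|² - |z + a|² = (1 - |a|²)(1 - |z|²)`, so
`|f z| ≤ |z + a| / |1 + a z| < 1`.
The remaining claims are evaluations of `f` and of its quotient-rule derivative
`(a z² + 2 z + a) / (1 + a z)²` at `0` and `1`.
-/

lemma one_add_mul_ne_zero_of_norm_lt_one {a z : ℂ} (ha : ‖a‖ ≤ 1) (hz : ‖z‖ < 1) :
    1 + a * z ≠ 0 := by
  intro h
  have : ‖a * z‖ < 1 := by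
    rw [norm_mul]
    nlinarith [norm_nonneg a, norm_nonneg z]
  rw [eq_neg_of_add_eq_zero_right h, norm_neg, norm_one] at this
  exact this.false

lemma normSq_one_add_conj_mul_sub_normSq_add (a z : ℂ) :
    normSq (1 + conj a * z) - normSq (z + a) = (1 - normSq a) * (1 - normSq z) := by
  simp only [normSq_apply, add_re, add_im, mul_re, mul_im, conj_re, conj_im, one_re, one_im]
  ring

lemma norm_add_lt_norm_one_add_conj_mul {a z : ℂ} (ha : ‖a‖ < 1) (hz : ‖z‖ < 1) :
    ‖z + a‖ < ‖1 + conj a * z‖ := by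
  have key := normSq_one_add_conj_mul_sub_normSq_add a z
  rw [← sq_lt_sq₀ (norm_nonneg _) (norm_nonneg _), Complex.sq_norm, Complex.sq_norm]
  have ha' : normSq a < 1 := by
    rw [← Complex.sq_norm]; exact pow_lt_one₀ (norm_nonneg a) ha two_ne_zero
  have hz' : normSq z < 1 := by
    rw [← Complex.sq_norm]; exact pow_lt_one₀ (norm_nonneg z) hz two_ne_zero
  nlinarith [mul_pos (sub_pos.2 ha') (sub_pos.2 hz')]

lemma hasDerivAt_mul_add_div_one_add_mul (a : ℂ) {p : ℂ} (hp : 1 + a * p ≠ 0) :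
    HasDerivAt (fun z : ℂ => z * (z + a) / (1 + a * z))
      ((a * p ^ 2 + 2 * p + a) / (1 + a * p) ^ 2) p := by
  have hnum : HasDerivAt (fun z : ℂ => z * (z + a)) (1 * (p + a) + p * 1) p :=
    (hasDerivAt_id p).mul ((hasDerivAt_id p).add_const a)
  have hden : HasDerivAt (fun z : ℂ => 1 + a * z) (a * 1) p :=
    ((hasDerivAt_id p).const_mul a).const_add 1
  exact (hnum.div hden hp).congr_deriv (by ring)

/-- **Sharpness of the boundary Schwarz Lemma.** For each real `a` with `0 ≤ a < 1`,
the function `f z = z (z + a) / (1 + a z)` is holomorphic on the unit disk, satisfies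
`|f z| < 1` there, `f 0 = 0`, `f'(0) = a`, has limit `1` at `1` within the disk, and
`f'(1) = 2 / (1 + a)`; hence equality holds in `|f'(b)| ≥ 2 / (1 + |f'(0)|)` at
`b = 1`. -/
theorem boundary_schwarz_sharp
    (a : ℝ) (ha0 : 0 ≤ a) (ha1 : a < 1)
    (f : ℂ → ℂ)
    (hf : f = fun z : ℂ => z * (z + (a : ℂ)) / (1 + (a : ℂ) * z)) :
    DifferentiableOn ℂ f {z : ℂ | ‖z‖ < 1} ∧
    (∀ z : ℂ, ‖z‖ < 1 → ‖f z‖ < 1) ∧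
    f 0 = 0 ∧
    deriv f 0 = (a : ℂ) ∧
    Tendsto f (nhdsWithin 1 {z : ℂ | ‖z‖ < 1}) (nhds 1) ∧
    deriv f 1 = 2 / (1 + (a : ℂ)) := by
  subst hf
  have ha : ‖(a : ℂ)‖ < 1 := by rwa [norm_real, Real.norm_of_nonneg ha0]
  have hden : ∀ z : ℂ, ‖z‖ < 1 → 1 + (a : ℂ) * z ≠ 0 := fun z hz ↦
    one_add_mul_ne_zero_of_norm_lt_one ha.le hz
  have hden1 : 1 + (a : ℂ) * 1 ≠ 0 := by
    rw [mul_one]; exact_mod_cast (by linarith : (1 + a : ℝ) ≠ 0)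
  refine ⟨fun z hz ↦ (hasDerivAt_mul_add_div_one_add_mul _ (hden z hz)).differentiableAt
      |>.differentiableWithinAt, fun z hz ↦ ?_, by simp, ?_, ?_, ?_⟩
  · have hlt : ‖z + a‖ < ‖1 + (a : ℂ) * z‖ := by
      simpa using norm_add_lt_norm_one_add_conj_mul ha hz
    rw [norm_div, norm_mul, div_lt_one ((norm_nonneg _).trans_lt hlt)]
    calc ‖z‖ * ‖z + a‖ ≤ ‖z + a‖ := mul_le_of_le_one_left (norm_nonneg _) hz.le
      _ < _ := hlt
  · rw [(hasDerivAt_mul_add_div_one_add_mul _ (by simp)).deriv]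
    simp
  · have hcont := (hasDerivAt_mul_add_div_one_add_mul _ hden1).continuousAt.continuousWithinAt
      (s := {z : ℂ | ‖z‖ < 1})
    convert hcont.tendsto using 2
    simp only [one_mul, mul_one] at hden1 ⊢
    exact (div_self hden1).symm
  · rw [(hasDerivAt_mul_add_div_one_add_mul _ hden1).deriv]
    rw [mul_one] at hden1
    field_simp
    ring
end
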